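/- arXiv:2209.12851 — 8 statements merged into one kernel-verified Lean document; each statement's English description precedes it below -/
import Mathlib

section
/- Let n ≥ 1 and let (p, q) be a Farey chain of length n. Then there exists an index i with 1 ≤ i ≤ n such that p i = p (i-1) + p (i+1) and q i = q (i-1) + q (i+1); that is, some interior slope of the chain is the mediant of its two neighbors. -/
/-- Two adjacent Farey neighbors (all entries positive) cannot have equal sums. -/
lemma farey_tie (a b c d : ℕ) (ha : 1 ≤ a) (hb : 1 ≤ b) (hd : 1 ≤ d)
    (hdet : c * b = a * d + 1) (hs : a + b = c + d) : False := by
  have hdet' : (c : ℤ) * b = a * d + 1 := by exact_mod_cast hdet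
  have hs' : (a : ℤ) + b = c + d := by exact_mod_cast hs
  have key : ((a : ℤ) + b) * ((c : ℤ) - a) = 1 := by linear_combination hdet' - (a : ℤ) * hs'
  have h2 : (2 : ℤ) ≤ (a : ℤ) + b := by exact_mod_cast Nat.add_le_add ha hb
  rcases le_or_gt (c : ℤ) a with h | h
  · nlinarith
  · have : (1 : ℤ) ≤ (c : ℤ) - a := by omega
    nlinarith

/-- In any Farey chain of length `n ≥ 1`, some interior slope is the
mediant of its two neighbors. -/
theorem farey_chain_has_mediant (n : ℕ) (hn : 1 ≤ n) (p q : ℕ → ℕ)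
    (hp0 : p 0 = 0) (hq0 : q 0 = 1)
    (hpn : p (n + 1) = 1) (hqn : q (n + 1) = 0)
    (hfarey : ∀ i ≤ n, p (i + 1) * q i = p i * q (i + 1) + 1) :
    ∃ i, 1 ≤ i ∧ i ≤ n ∧ p i = p (i - 1) + p (i + 1) ∧ q i = q (i - 1) + q (i + 1) := by
  -- positivity of interior numerators/denominators
  have hqpos : ∀ i ≤ n, 1 ≤ q i := by
    intro i hi
    have h := hfarey i hi
    rcases Nat.eq_zero_or_pos (q i) with h0 | h0
    · rw [h0, Nat.mul_zero] at h; omega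
    · exact h0
  have hppos : ∀ i, 1 ≤ i → i ≤ n → 1 ≤ p i := by
    intro i hi1 hi2
    obtain ⟨m, rfl⟩ : ∃ m, i = m + 1 := ⟨i - 1, by omega⟩
    have h := hfarey m (by omega)
    rcases Nat.eq_zero_or_pos (p (m + 1)) with h0 | h0
    · rw [h0, Nat.zero_mul] at h; omega
    · exact h0
  -- choose the interior index maximizing p i + q i
  obtain ⟨i, himem, hmax⟩ := Finset.exists_max_image (Finset.Icc 1 n) (fun j => p j + q j)
    ⟨1, Finset.mem_Icc.mpr ⟨le_refl 1, hn⟩⟩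
  rw [Finset.mem_Icc] at himem
  obtain ⟨hi1, hi2⟩ := himem
  obtain ⟨m, rfl⟩ : ∃ m, i = m + 1 := ⟨i - 1, by omega⟩
  have hpi : 1 ≤ p (m + 1) := hppos _ hi1 hi2
  have hqi : 1 ≤ q (m + 1) := hqpos _ hi2
  have h1 : p (m + 1) * q m = p m * q (m + 1) + 1 := hfarey m (by omega)
  have h2 : p (m + 2) * q (m + 1) = p (m + 1) * q (m + 2) + 1 := hfarey (m + 1) hi2
  -- coprimality of p i, q i
  have hcop : Nat.Coprime (p (m + 1)) (q (m + 1)) := by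
    have hg1 : Nat.gcd (p (m + 1)) (q (m + 1)) ∣ p (m + 2) * q (m + 1) :=
      Dvd.dvd.mul_left (Nat.gcd_dvd_right _ _) _
    have hg2 : Nat.gcd (p (m + 1)) (q (m + 1)) ∣ p (m + 1) * q (m + 2) :=
      Dvd.dvd.mul_right (Nat.gcd_dvd_left _ _) _
    have : Nat.gcd (p (m + 1)) (q (m + 1)) ∣ 1 := by
      rw [h2] at hg1
      exact (Nat.dvd_add_right hg2).mp hg1
    exact Nat.eq_one_of_dvd_one this
  -- the key cross identity
  have hkey : (p m + p (m + 2)) * q (m + 1) = (q m + q (m + 2)) * p (m + 1) := by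
    have h1' : (p (m + 1) : ℤ) * q m = p m * q (m + 1) + 1 := by exact_mod_cast h1
    have h2' : (p (m + 2) : ℤ) * q (m + 1) = p (m + 1) * q (m + 2) + 1 := by exact_mod_cast h2
    have : ((p m : ℤ) + p (m + 2)) * q (m + 1) = ((q m : ℤ) + q (m + 2)) * p (m + 1) := by
      linear_combination h2' - h1'
    exact_mod_cast this
  -- extract the scaling factor k
  have hdvd : p (m + 1) ∣ (p m + p (m + 2)) := by
    have : p (m + 1) ∣ (p m + p (m + 2)) * q (m + 1) := ⟨q m + q (m + 2), by rw [hkey]; ring⟩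
    exact hcop.dvd_of_dvd_mul_right this
  obtain ⟨k, hk⟩ := hdvd
  have hkq' : q m + q (m + 2) = k * q (m + 1) := by
    have : p (m + 1) * (k * q (m + 1)) = p (m + 1) * (q m + q (m + 2)) := by
      have := hkey
      rw [hk] at this
      nlinarith [this]
    exact (Nat.eq_of_mul_eq_mul_left (by omega) this).symm
  -- bounds on the sums of neighbors
  have hsum2 : 2 ≤ p (m + 1) + q (m + 1) := by omega
  have hleft : p m + q m ≤ p (m + 1) + q (m + 1) - 1 := by
    rcases Nat.eq_zero_or_pos m with rfl | hm
    · rw [hp0, hq0]; omega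
    · have hle : p m + q m ≤ p (m + 1) + q (m + 1) :=
        hmax m (Finset.mem_Icc.mpr ⟨hm, by omega⟩)
      rcases lt_or_eq_of_le hle with h | h
      · omega
      · exact absurd h (fun h => farey_tie (p m) (q m) (p (m + 1)) (q (m + 1))
          (hppos m hm (by omega)) (hqpos m (by omega)) hqi h1 h)
  have hright : p (m + 2) + q (m + 2) ≤ p (m + 1) + q (m + 1) - 1 := by
    rcases eq_or_lt_of_le hi2 with h | h
    · rw [show m + 2 = n + 1 by omega, hpn, hqn]; omega
    · have hm2 : m + 2 ≤ n := by omega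
      have hle : p (m + 2) + q (m + 2) ≤ p (m + 1) + q (m + 1) :=
        hmax (m + 2) (Finset.mem_Icc.mpr ⟨by omega, hm2⟩)
      rcases lt_or_eq_of_le hle with h' | h'
      · omega
      · exact absurd h' (fun h' => farey_tie (p (m + 1)) (q (m + 1)) (p (m + 2)) (q (m + 2))
          hpi hqi (hqpos _ hm2) h2 h'.symm)
  -- now k = 1
  have hksum : p m + p (m + 2) + (q m + q (m + 2)) = k * (p (m + 1) + q (m + 1)) := by
    rw [hk, hkq']; ring
  have hk1 : k = 1 := by
    have hb1 : 1 ≤ q m + q (m + 2) := by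
      rcases Nat.eq_zero_or_pos m with rfl | hm
      · rw [hq0]; omega
      · have := hqpos m (by omega); omega
    rcases Nat.eq_zero_or_pos k with rfl | hk0
    · omega
    rcases Nat.lt_or_ge k 2 with h | h
    · omega
    · exfalso
      have : 2 * (p (m + 1) + q (m + 1)) ≤ k * (p (m + 1) + q (m + 1)) :=
        Nat.mul_le_mul_right _ h
      omega
  subst hk1
  rw [mul_one] at hk
  rw [one_mul] at hkq'
  refine ⟨m + 1, by omega, hi2, ?_, ?_⟩
  · simp only [Nat.add_sub_cancel]
    show p (m + 1) = p m + p (m + 2)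
    omega
  · simp only [Nat.add_sub_cancel]
    show q (m + 1) = q m + q (m + 2)
    omega
end

section
/- Let n ≥ 1 and let (p, q) be a Farey chain of length n. Then for every index i with 1 ≤ i ≤ n there exist indices a, b with 0 ≤ a, b ≤ n+1 such that p a + p b = p i, q a + q b = q i, and p i * q a = p a * q i + 1. In other words, the left and right parents of each interior slope p_i/q_i of the chain occur among the slopes of the chain (possibly the endpoints 0/1 and 1/0). -/
set_option maxHeartbeats 1000000

private lemma farey_aux : ∀ n : ℕ, 1 ≤ n → ∀ p q : ℕ → ℕ,
    p 0 = 0 → q 0 = 1 → p (n + 1) = 1 → q (n + 1) = 0 →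
    (∀ i ≤ n, p (i + 1) * q i = p i * q (i + 1) + 1) →
    ∀ i, 1 ≤ i → i ≤ n →
      ∃ a b, a ≤ n + 1 ∧ b ≤ n + 1 ∧
        p a + p b = p i ∧ q a + q b = q i ∧ p i * q a = p a * q i + 1 := by
  intro n
  induction n using Nat.strong_induction_on with
  | _ n ih =>
  intro hn p q hp0 hq0 hpn hqn hfarey i hi1 hi2
  -- positivity facts
  have hqpos : ∀ j ≤ n, 1 ≤ q j := by
    intro j hj
    have h := hfarey j hj
    rcases Nat.eq_zero_or_pos (q j) with h0 | h0
    · rw [h0, Nat.mul_zero] at h; omega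
    · exact h0
  have hppos : ∀ j, 1 ≤ j → j ≤ n + 1 → 1 ≤ p j := by
    intro j hj1 hj2
    obtain ⟨j', rfl⟩ : ∃ j', j = j' + 1 := ⟨j - 1, by omega⟩
    have h := hfarey j' (by omega)
    rcases Nat.eq_zero_or_pos (p (j' + 1)) with h0 | h0
    · rw [h0, Nat.zero_mul] at h; omega
    · exact h0
  rcases eq_or_lt_of_le hn with h1 | h1
  · -- base case n = 1
    obtain rfl : n = 1 := h1.symm
    obtain rfl : i = 1 := by omega
    have e0 := hfarey 0 (by norm_num)
    have e1 := hfarey 1 le_rfl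
    rw [hp0, hq0] at e0
    rw [hpn, hqn] at e1
    simp only [mul_one, mul_zero, zero_mul, one_mul, zero_add] at e0 e1
    refine ⟨0, 2, by omega, le_rfl, ?_, ?_, ?_⟩ <;>
      simp only [hp0, hq0, hpn, hqn, e0, e1] <;> omega
  · -- inductive case n ≥ 2
    obtain ⟨N, rfl⟩ : ∃ N, n = N + 1 := ⟨n - 1, by omega⟩
    have hN : 1 ≤ N := by omega
    -- pick interior index with maximal p+q
    obtain ⟨k, hk, hmax⟩ := Finset.exists_max_image (Finset.Icc 1 (N + 1))
      (fun j => p j + q j) ⟨1, by simp⟩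
    rw [Finset.mem_Icc] at hk
    obtain ⟨m, rfl⟩ : ∃ m, k = m + 1 := ⟨k - 1, by omega⟩
    have hmn : m + 1 ≤ N + 1 := hk.2
    have e1 := hfarey m (by omega)
    have e2 := hfarey (m + 1) (by omega)
    have e1z : (p (m + 1) : ℤ) * q m = p m * q (m + 1) + 1 := by exact_mod_cast e1
    have e2z : (p (m + 2) : ℤ) * q (m + 1) = p (m + 1) * q (m + 2) + 1 := by
      exact_mod_cast e2
    set d : ℤ := (p (m + 2) : ℤ) * q m - p m * q (m + 2) with hd
    have hd1 : (p (m + 1) : ℤ) * d = p m + p (m + 2) := by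
      rw [hd]; linear_combination (p (m + 2) : ℤ) * e1z + (p m : ℤ) * e2z
    have hd2 : (q (m + 1) : ℤ) * d = q m + q (m + 2) := by
      rw [hd]; linear_combination (q (m + 2) : ℤ) * e1z + (q m : ℤ) * e2z
    have hq1 : 1 ≤ q (m + 1) := hqpos (m + 1) (by omega)
    have hp1 : 1 ≤ p (m + 1) := hppos (m + 1) (by omega) (by omega)
    have hqm : 1 ≤ q m := hqpos m (by omega)
    have hM2 : 2 ≤ p (m + 1) + q (m + 1) := by omega
    have hdpos : 1 ≤ d := by
      by_contra h
      push_neg at h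
      have h2 : (q (m + 1) : ℤ) * d ≤ 0 := by
        have : (0 : ℤ) ≤ (q (m + 1) : ℤ) := by positivity
        nlinarith
      have h3 : (1 : ℤ) ≤ (q m : ℤ) + q (m + 2) := by
        have : (1 : ℤ) ≤ (q m : ℤ) := by exact_mod_cast hqm
        have : (0 : ℤ) ≤ (q (m + 2) : ℤ) := by positivity
        omega
      omega
    have hdone : d = 1 := by
      by_contra hne
      have hd2' : 2 ≤ d := by omega
      -- neighbors' sums
      have hsum1 : 2 * (p (m + 1) + q (m + 1)) ≤
          (p m + q m) + (p (m + 2) + q (m + 2)) := by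
        have hA : 2 * (p (m + 1) : ℤ) ≤ p m + p (m + 2) := by
          have h0 := mul_nonneg (show (0 : ℤ) ≤ (p (m + 1) : ℤ) by positivity)
            (show (0 : ℤ) ≤ d - 2 by omega)
          linarith [h0, hd1]
        have hB : 2 * (q (m + 1) : ℤ) ≤ q m + q (m + 2) := by
          have h0 := mul_nonneg (show (0 : ℤ) ≤ (q (m + 1) : ℤ) by positivity)
            (show (0 : ℤ) ≤ d - 2 by omega)
          linarith [h0, hd2]
        have hC : 2 * (p (m + 1) + q (m + 1) : ℤ) ≤
            ((p m : ℤ) + q m) + ((p (m + 2) : ℤ) + q (m + 2)) := by linarith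
        exact_mod_cast hC
      have hbm : p m + q m ≤ p (m + 1) + q (m + 1) := by
        rcases Nat.eq_zero_or_pos m with rfl | hm0
        · rw [hp0, hq0]; omega
        · exact hmax m (Finset.mem_Icc.mpr ⟨hm0, by omega⟩)
      have hb2 : p (m + 2) + q (m + 2) ≤ p (m + 1) + q (m + 1) := by
        rcases eq_or_lt_of_le hmn with he | he
        · rw [show m + 2 = N + 1 + 1 by omega, hpn, hqn]; omega
        · exact hmax (m + 2) (Finset.mem_Icc.mpr ⟨by omega, by omega⟩)
      have hseq : p (m + 2) + q (m + 2) = p (m + 1) + q (m + 1) := by omega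
      -- adjacent indices with equal sums is impossible
      have hsz : (p (m + 2) : ℤ) + q (m + 2) = p (m + 1) + q (m + 1) := by
        exact_mod_cast hseq
      have key : ((p (m + 1) : ℤ) + q (m + 1)) * ((q (m + 1) : ℤ) - q (m + 2)) = 1 := by
        linear_combination e2z - (q (m + 1) : ℤ) * hsz
      have hge : (2 : ℤ) ≤ (p (m + 1) : ℤ) + q (m + 1) := by exact_mod_cast hM2
      have := Int.eq_one_of_mul_eq_one_right (by omega) key
      omega
    have hdnat : p (m + 2) * q m = p m * q (m + 2) + 1 := by
      have : (p (m + 2) : ℤ) * q m = p m * q (m + 2) + 1 := by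
        rw [hd] at hdone; linarith
      exact_mod_cast this
    have hpmed : p m + p (m + 2) = p (m + 1) := by
      rw [hdone, mul_one] at hd1; exact_mod_cast hd1.symm
    have hqmed : q m + q (m + 2) = q (m + 1) := by
      rw [hdone, mul_one] at hd2; exact_mod_cast hd2.symm
    -- the removed-index chain
    rcases eq_or_ne i (m + 1) with rfl | hik
    · exact ⟨m, m + 2, by omega, by omega, hpmed, hqmed, e1⟩
    · set emb : ℕ → ℕ := fun j => if j ≤ m then j else j + 1 with hemb
      set P : ℕ → ℕ := fun j => p (emb j) with hP
      set Q : ℕ → ℕ := fun j => q (emb j) with hQ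
      have hPle : ∀ j, j ≤ m → P j = p j := by
        intro j hj; simp only [hP, hemb]; rw [if_pos hj]
      have hPgt : ∀ j, m < j → P j = p (j + 1) := by
        intro j hj; simp only [hP, hemb]; rw [if_neg (by omega)]
      have hQle : ∀ j, j ≤ m → Q j = q j := by
        intro j hj; simp only [hQ, hemb]; rw [if_pos hj]
      have hQgt : ∀ j, m < j → Q j = q (j + 1) := by
        intro j hj; simp only [hQ, hemb]; rw [if_neg (by omega)]
      have hP0 : P 0 = 0 := by rw [hPle 0 (by omega)]; exact hp0
      have hQ0 : Q 0 = 1 := by rw [hQle 0 (by omega)]; exact hq0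
      have hPn : P (N + 1) = 1 := by rw [hPgt (N + 1) (by omega)]; exact hpn
      have hQn : Q (N + 1) = 0 := by rw [hQgt (N + 1) (by omega)]; exact hqn
      have hF : ∀ j ≤ N, P (j + 1) * Q j = P j * Q (j + 1) + 1 := by
        intro j hj
        rcases lt_trichotomy j m with h | rfl | h
        · rw [hPle (j + 1) (by omega), hQle j (by omega), hPle j (by omega),
            hQle (j + 1) (by omega)]
          exact hfarey j (by omega)
        · rw [hPgt (j + 1) (by omega), hQle j (by omega), hPle j (by omega),
            hQgt (j + 1) (by omega)]
          exact hdnat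
        · rw [hPgt (j + 1) (by omega), hQgt j h, hPgt j h, hQgt (j + 1) (by omega)]
          exact hfarey (j + 1) (by omega)
      have IH := ih N (by omega) hN P Q hP0 hQ0 hPn hQn hF
      have hembneq : ∀ a, a ≤ N + 1 → emb a ≤ N + 2 := by
        intro a ha; simp only [hemb]; split <;> omega
      have hPemb : ∀ a, P a = p (emb a) := fun a => rfl
      have hQemb : ∀ a, Q a = q (emb a) := fun a => rfl
      rcases lt_or_gt_of_ne hik with hlt | hgt
      · obtain ⟨a, b, ha, hb, h₁, h₂, h₃⟩ := IH i hi1 (by omega)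
        rw [hPemb, hPemb, hPle i (by omega)] at h₁
        rw [hQemb, hQemb, hQle i (by omega)] at h₂
        rw [hQemb a, hPemb a, hPle i (by omega), hQle i (by omega)] at h₃
        exact ⟨emb a, emb b, hembneq a ha, hembneq b hb, h₁, h₂, h₃⟩
      · obtain ⟨a, b, ha, hb, h₁, h₂, h₃⟩ := IH (i - 1) (by omega) (by omega)
        have him : i - 1 + 1 = i := by omega
        rw [hPemb, hPemb, hPgt (i - 1) (by omega), him] at h₁
        rw [hQemb, hQemb, hQgt (i - 1) (by omega), him] at h₂
        rw [hQemb a, hPemb a, hPgt (i - 1) (by omega), hQgt (i - 1) (by omega), him] at h₃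
        exact ⟨emb a, emb b, hembneq a ha, hembneq b hb, h₁, h₂, h₃⟩

/-- In a Farey chain of length `n ≥ 1`, the left and right parents of
each interior slope occur among the slopes of the chain. -/
theorem farey_chain_parents_mem (n : ℕ) (hn : 1 ≤ n) (p q : ℕ → ℕ)
    (hp0 : p 0 = 0) (hq0 : q 0 = 1)
    (hpn : p (n + 1) = 1) (hqn : q (n + 1) = 0)
    (hfarey : ∀ i ≤ n, p (i + 1) * q i = p i * q (i + 1) + 1) :
    ∀ i, 1 ≤ i → i ≤ n →
      ∃ a b, a ≤ n + 1 ∧ b ≤ n + 1 ∧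
        p a + p b = p i ∧ q a + q b = q i ∧ p i * q a = p a * q i + 1 := by
  exact farey_aux n hn p q hp0 hq0 hpn hqn hfarey
end

section
/- Let n ≥ 1 and let (p, q) be a Farey chain of length n. Then, working in ℤ, (q 1) + (p n) + ∑_{i=1}^{n} ( p (i+1) * q (i-1) − p (i-1) * q (i+1) ) = 3n. (Geometrically: the sum of the self-intersection numbers of the n+2 spheres in the ring configuration in #ⁿℂP², namely the cyclic Farey distances Δ(p_{i−1}/q_{i−1}, p_{i+1}/q_{i+1}), equals 3n.) -/
/-!
Write the fraction `p / q` as the lattice vector `(q, p)`. Consecutive members of a Farey chain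
have determinant `1`, which forces `v (i - 1) + v (i + 1) = a i • v i`, where `a i` is the
next-nearest-neighbour distance. At a vertex where `q + p` is maximal this gives `a i ≤ 2`, and
`a i = 2` is impossible: both neighbours would then have the same coordinate sum `s ≥ 2` as
`v i`, and `s` divides the determinant of two such vectors. So `a i = 1`, i.e. `v i` is the
mediant of its neighbours; deleting it leaves a Farey chain of length `n - 1` and lowers the
distances at both neighbours by one, so the cyclic sum drops by exactly `3`.
-/

namespace Farey

open Finset

def cross (u v : ℤ × ℤ) : ℤ := u.1 * v.2 - u.2 * v.1

theorem cross_smul_eq_add {u x w : ℤ × ℤ} (hux : cross u x = 1) (hxw : cross x w = 1) :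
    cross u w • x = u + w := by
  unfold cross at *
  ext <;> simp only [Prod.smul_fst, Prod.smul_snd, Prod.fst_add, Prod.snd_add, smul_eq_mul]
  · linear_combination u.1 * hxw + w.1 * hux
  · linear_combination u.2 * hxw + w.2 * hux

theorem cross_sub_left (u v w : ℤ × ℤ) : cross (u - v) w = cross u w - cross v w := by
  simp only [cross, Prod.fst_sub, Prod.snd_sub]; ring

theorem cross_sub_right (u v w : ℤ × ℤ) : cross u (v - w) = cross u v - cross u w := by
  simp only [cross, Prod.fst_sub, Prod.snd_sub]; ring

theorem eq_one_of_smul_eq_add {a : ℤ} {u x w : ℤ × ℤ} (h : a • x = u + w)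
    (hux : cross u x = 1) (hx : 2 ≤ x.1 + x.2) (hu : 1 ≤ u.1 + u.2) (hw : 0 ≤ w.1 + w.2)
    (hu_le : u.1 + u.2 ≤ x.1 + x.2) (hw_le : w.1 + w.2 ≤ x.1 + x.2) : a = 1 := by
  have hsum : a * (x.1 + x.2) = (u.1 + u.2) + (w.1 + w.2) := by
    have h1 := congrArg Prod.fst h
    have h2 := congrArg Prod.snd h
    simp only [Prod.smul_fst, Prod.smul_snd, Prod.fst_add, Prod.snd_add, smul_eq_mul] at h1 h2
    linear_combination h1 + h2
  have ha_pos : 0 < a := by nlinarith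
  have ha_lt : a < 2 := by
    by_contra! ha
    have hu_eq : u.1 + u.2 = x.1 + x.2 := by nlinarith
    -- vectors with the same coordinate sum have determinant divisible by it
    have hdvd : (x.1 + x.2) * (x.2 - u.2) = 1 := by
      unfold cross at hux; linear_combination hux - x.2 * hu_eq
    have := Int.le_of_dvd one_pos (Dvd.intro _ hdvd)
    omega
  omega

/-- The term of index `i` is the next-nearest-neighbour distance at vertex `i + 1`. -/
def quidditySum (V : ℕ → ℤ × ℤ) (N : ℕ) : ℤ := ∑ i ∈ range N, cross (V i) (V (i + 2))

def eraseAt {α : Type*} (V : ℕ → α) (k i : ℕ) : α := if i < k then V i else V (i + 1)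

theorem eraseAt_of_lt {α : Type*} {V : ℕ → α} {k i : ℕ} (h : i < k) : eraseAt V k i = V i :=
  if_pos h

theorem eraseAt_of_le {α : Type*} {V : ℕ → α} {k i : ℕ} (h : k ≤ i) :
    eraseAt V k i = V (i + 1) :=
  if_neg (Nat.not_lt.mpr h)

theorem quidditySum_eraseAt {V : ℕ → ℤ × ℤ} {N k : ℕ} (hk : 1 ≤ k) (hkN : k + 2 ≤ N + 1)
    (hV : ∀ i ≤ N + 1, cross (V i) (V (i + 1)) = 1) (hear : cross (V k) (V (k + 2)) = 1) :
    quidditySum V (N + 1) = quidditySum (eraseAt V (k + 1)) N + 3 := by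
  obtain ⟨j, rfl⟩ : ∃ j, k = j + 1 := ⟨k - 1, by omega⟩
  obtain ⟨r, rfl⟩ : ∃ r, N = j + 2 + r := ⟨N - (j + 2), by omega⟩
  have hmid : V (j + 1) + V (j + 3) = V (j + 2) := by
    simpa [hear] using (cross_smul_eq_add (hV (j + 1) (by omega)) (hV (j + 2) (by omega))).symm
  have hleft : cross (V j) (V (j + 3)) = cross (V j) (V (j + 2)) - 1 := by
    rw [eq_sub_of_add_eq' hmid, cross_sub_right, hV j (by omega)]
  have hright : cross (V (j + 1)) (V (j + 4)) = cross (V (j + 2)) (V (j + 4)) - 1 := by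
    rw [eq_sub_of_add_eq hmid, cross_sub_left, hV (j + 3) (by omega)]
  have hlow : ∀ i ∈ range j, cross (eraseAt V (j + 2) i) (eraseAt V (j + 2) (i + 2)) =
      cross (V i) (V (i + 2)) := fun i hi => by
    rw [mem_range] at hi
    rw [eraseAt_of_lt (by omega), eraseAt_of_lt (by omega)]
  have hhigh : ∀ i ∈ range r, cross (eraseAt V (j + 2) (j + 2 + i))
      (eraseAt V (j + 2) (j + 2 + i + 2)) = cross (V (j + 3 + i)) (V (j + 3 + i + 2)) :=
    fun i _ => by rw [eraseAt_of_le (by omega), eraseAt_of_le (by omega)]; congr 2 <;> omega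
  rw [show j + 2 + r + 1 = j + 3 + r by omega]
  show quidditySum V (j + 3 + r) = quidditySum (eraseAt V (j + 2)) (j + 2 + r) + 3
  rw [quidditySum, quidditySum, sum_range_add _ (j + 3), sum_range_add _ (j + 2),
    sum_range_succ, sum_range_succ, sum_range_succ, sum_range_succ, sum_range_succ,
    sum_congr rfl hlow, sum_congr rfl hhigh, eraseAt_of_lt (show j < j + 2 by omega),
    eraseAt_of_lt (show j + 1 < j + 2 by omega), eraseAt_of_le (le_refl (j + 2)),
    eraseAt_of_le (show j + 2 ≤ j + 1 + 2 by omega)]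
  linarith

/-- A Farey chain `V 1, …, V N` from `0/1` to `1/0` in the coordinates `(q, p)`, padded by
`V 0 = -V N` and `V (N + 1) = -V 1` so that the wrap-around terms of the cyclic sum become
ordinary terms of `quidditySum V N`. -/
structure IsFareyCycle (V : ℕ → ℤ × ℤ) (N : ℕ) : Prop where
  zero : V 0 = (0, -1)
  one : V 1 = (1, 0)
  last : V N = (0, 1)
  succ_last : V (N + 1) = (-1, 0)
  nonneg : ∀ i, 1 ≤ i → i ≤ N → 0 ≤ (V i).1 ∧ 0 ≤ (V i).2
  cross_succ : ∀ i ≤ N, cross (V i) (V (i + 1)) = 1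

namespace IsFareyCycle

variable {V : ℕ → ℤ × ℤ} {N : ℕ}

theorem one_le_fst (hV : IsFareyCycle V N) {i : ℕ} (hi : 1 ≤ i) (hiN : i < N) :
    1 ≤ (V i).1 := by
  have h := hV.cross_succ i hiN.le
  obtain ⟨hx, hy⟩ := hV.nonneg i hi hiN.le
  obtain ⟨hx', hy'⟩ := hV.nonneg (i + 1) (by omega) hiN
  unfold cross at h
  nlinarith

theorem one_le_snd (hV : IsFareyCycle V N) {i : ℕ} (hi : 1 < i) (hiN : i ≤ N) :
    1 ≤ (V i).2 := by
  obtain ⟨j, rfl⟩ : ∃ j, i = j + 1 := ⟨i - 1, by omega⟩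
  have h := hV.cross_succ j (by omega)
  obtain ⟨hx, hy⟩ := hV.nonneg j (by omega) (by omega)
  obtain ⟨hx', hy'⟩ := hV.nonneg (j + 1) (by omega) hiN
  unfold cross at h
  nlinarith

theorem exists_ear (hV : IsFareyCycle V N) (hN : 3 ≤ N) :
    ∃ k, 1 ≤ k ∧ k + 2 ≤ N ∧ cross (V k) (V (k + 2)) = 1 := by
  let s : ℕ → ℤ := fun i => (V i).1 + (V i).2
  obtain ⟨k, hk, hmax⟩ := exists_max_image (Icc 1 N) s ⟨2, by simp; omega⟩
  simp only [mem_Icc] at hk hmax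
  have hs2 : 2 ≤ s 2 := by
    have := hV.one_le_fst (i := 2) (by omega) (by omega)
    have := hV.one_le_snd (i := 2) (by omega) (by omega)
    simp only [s]; omega
  have hs2_le := hmax 2 ⟨by omega, by omega⟩
  have hs1 : s 1 = 1 := by simp [s, hV.one]
  have hsN : s N = 1 := by simp [s, hV.last]
  have hk1 : k ≠ 1 := by rintro rfl; omega
  have hkN : k ≠ N := by rintro rfl; omega
  obtain ⟨m, rfl⟩ : ∃ m, k = m + 1 := ⟨k - 1, by omega⟩
  refine ⟨m, by omega, by omega, ?_⟩
  have hprev_pos : 1 ≤ s m := by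
    have := hV.one_le_fst (i := m) (by omega) (by omega)
    have := (hV.nonneg m (by omega) (by omega)).2
    simp only [s]; omega
  have hnext_nonneg : 0 ≤ s (m + 2) := by
    have := hV.nonneg (m + 2) (by omega) (by omega)
    simp only [s]; omega
  exact eq_one_of_smul_eq_add
    (cross_smul_eq_add (hV.cross_succ m (by omega)) (hV.cross_succ (m + 1) (by omega)))
    (hV.cross_succ m (by omega)) (show 2 ≤ s (m + 1) by omega) hprev_pos hnext_nonneg
    (hmax m ⟨by omega, by omega⟩) (hmax (m + 2) ⟨by omega, by omega⟩)

theorem eraseAt (hV : IsFareyCycle V (N + 1)) {k : ℕ} (hk : 1 ≤ k) (hkN : k + 2 ≤ N + 1)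
    (hear : cross (V k) (V (k + 2)) = 1) : IsFareyCycle (Farey.eraseAt V (k + 1)) N where
  zero := by rw [eraseAt_of_lt (by omega), hV.zero]
  one := by rw [eraseAt_of_lt (by omega), hV.one]
  last := by rw [eraseAt_of_le (by omega), hV.last]
  succ_last := by rw [eraseAt_of_le (by omega), hV.succ_last]
  nonneg i hi hiN := by
    unfold Farey.eraseAt
    split_ifs
    · exact hV.nonneg i hi (by omega)
    · exact hV.nonneg (i + 1) (by omega) (by omega)
  cross_succ i hi := by
    unfold Farey.eraseAt
    split_ifs
    · exact hV.cross_succ i (by omega)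
    · obtain rfl : i = k := by omega
      exact hear
    · omega
    · exact hV.cross_succ (i + 1) (by omega)

theorem quidditySum_eq {n : ℕ} (hV : IsFareyCycle V (n + 2)) : quidditySum V (n + 2) = 3 * n := by
  induction n generalizing V with
  | zero =>
    simp [quidditySum, sum_range_succ, cross, hV.zero, hV.one, hV.last, hV.succ_last]
  | succ n ih =>
    have hV' : IsFareyCycle V (n + 2 + 1) := hV
    obtain ⟨k, hk, hkN, hear⟩ := hV'.exists_ear (by omega)
    rw [show n + 1 + 2 = n + 2 + 1 by omega, quidditySum_eraseAt hk hkN hV'.cross_succ hear,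
      ih (hV'.eraseAt hk hkN hear)]
    push_cast; ring

end IsFareyCycle

def ofChain (n : ℕ) (p q : ℕ → ℕ) : ℕ → ℤ × ℤ
  | 0 => (0, -1)
  | i + 1 => if i ≤ n + 1 then (q i, p i) else (-1, 0)

theorem isFareyCycle_ofChain {n : ℕ} {p q : ℕ → ℕ} (hp0 : p 0 = 0) (hq0 : q 0 = 1)
    (hpn : p (n + 1) = 1) (hqn : q (n + 1) = 0)
    (hfarey : ∀ i ≤ n, p (i + 1) * q i = p i * q (i + 1) + 1) :
    IsFareyCycle (ofChain n p q) (n + 2) where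
  zero := rfl
  one := by simp [ofChain, hp0, hq0]
  last := by simp [ofChain, hpn, hqn]
  succ_last := by simp [ofChain]
  nonneg i hi hiN := by
    obtain ⟨i, rfl⟩ : ∃ j, i = j + 1 := ⟨i - 1, by omega⟩
    simp [ofChain, show i ≤ n + 1 by omega]
  cross_succ i hi := by
    rcases i with _ | i
    · simp [ofChain, cross, hp0, hq0]
    rcases (show i ≤ n ∨ i = n + 1 by omega) with hi | rfl
    · have h : (p (i + 1) : ℤ) * q i = p i * q (i + 1) + 1 := by exact_mod_cast hfarey i hi
      rw [ofChain, ofChain, if_pos (by omega), if_pos (by omega), cross]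
      linear_combination h
    · simp [ofChain, cross, hpn, hqn]

theorem quidditySum_ofChain (n : ℕ) (p q : ℕ → ℕ) :
    quidditySum (ofChain n p q) (n + 2) = (q 1 : ℤ) + (p n : ℤ) +
      ∑ i ∈ Icc 1 n, ((p (i + 1) : ℤ) * (q (i - 1) : ℤ) - (p (i - 1) : ℤ) * (q (i + 1) : ℤ)) := by
  rw [quidditySum, sum_range_succ, sum_range_succ', ← Ico_add_one_right_eq_Icc,
    sum_Ico_eq_sum_range, Nat.add_sub_cancel]
  have hmid : ∀ i ∈ range n, cross (ofChain n p q (i + 1)) (ofChain n p q (i + 1 + 2)) =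
      (p (1 + i + 1) : ℤ) * q (1 + i - 1) - (p (1 + i - 1) : ℤ) * q (1 + i + 1) := fun i hi => by
    rw [mem_range] at hi
    rw [show 1 + i - 1 = i by omega, show 1 + i + 1 = i + 2 by omega, ofChain, ofChain,
      if_pos (by omega), if_pos (by omega), cross]
    ring
  rw [sum_congr rfl hmid]
  simp [ofChain, cross]
  ring

end Farey

theorem farey_chain_selfintersection_sum_general (n : ℕ) (p q : ℕ → ℕ)
    (hp0 : p 0 = 0) (hq0 : q 0 = 1)
    (hpn : p (n + 1) = 1) (hqn : q (n + 1) = 0)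
    (hfarey : ∀ i ≤ n, p (i + 1) * q i = p i * q (i + 1) + 1) :
    (q 1 : ℤ) + (p n : ℤ) +
      ∑ i ∈ Finset.Icc 1 n,
        ((p (i + 1) : ℤ) * (q (i - 1) : ℤ) - (p (i - 1) : ℤ) * (q (i + 1) : ℤ)) =
      3 * n := by
  rw [← Farey.quidditySum_ofChain]
  exact (Farey.isFareyCycle_ofChain hp0 hq0 hpn hqn hfarey).quidditySum_eq

/-- For a Farey chain of length `n ≥ 1`, the cyclic sum of
next-nearest-neighbor Farey distances equals `3n`. -/
theorem farey_chain_selfintersection_sum (n : ℕ) (hn : 1 ≤ n) (p q : ℕ → ℕ)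
    (hp0 : p 0 = 0) (hq0 : q 0 = 1)
    (hpn : p (n + 1) = 1) (hqn : q (n + 1) = 0)
    (hfarey : ∀ i ≤ n, p (i + 1) * q i = p i * q (i + 1) + 1) :
    (q 1 : ℤ) + (p n : ℤ) +
      ∑ i ∈ Finset.Icc 1 n,
        ((p (i + 1) : ℤ) * (q (i - 1) : ℤ) - (p (i - 1) : ℤ) * (q (i + 1) : ℤ)) =
      3 * n :=
  farey_chain_selfintersection_sum_general n p q hp0 hq0 hpn hqn hfarey
end

section
/- Let n ≥ 1, let (p, q) be a Farey chain of length n equipped with a parent assignment (j₁, j₂), let (w_i)_{0 ≤ i ≤ n+1} be an associated family of weight vectors in ℤⁿ and let (s_j)_{0 ≤ j ≤ n+1} be the associated Σ-vectors in ℤⁿ. Then for every 1 ≤ i ≤ n and 0 ≤ j ≤ n+1: ⟨w_i, s_j⟩ = −1 if j = i; ⟨w_i, s_j⟩ = q i if j = 0; ⟨w_i, s_j⟩ = p i if j = n+1; and ⟨w_i, s_j⟩ = 0 in all other cases. -/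
/-! Both `k ↦ ⟨w_k, s_j⟩` and the claimed closed form vanish at `0` and `n + 1` and satisfy
`f i = f (j₁ i) + f (j₂ i) + s_j i`: for the dot product this is the defining recursion of `w`,
for the closed form it is the additivity of `p` and `q` along parents. Since `p + q` strictly decreases
from a fraction to its parents (the parents are unimodular, so neither is `0/0`), such a recursion has at most one solution. -/

open Finset

theorem mediant_det_parents {a b c d : ℕ} (h : (a + c) * b = a * (b + d) + 1) :
    c * b = a * d + 1 := by
  linarith [add_mul a c b, mul_add a b d]

theorem add_lt_mediant_left {a b c d : ℕ} (h : c * b = a * d + 1) :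
    a + b < a + c + (b + d) := by
  have : 0 < c := Nat.pos_of_ne_zero (by rintro rfl; simp at h)
  omega

theorem add_lt_mediant_right {a b c d : ℕ} (h : c * b = a * d + 1) :
    c + d < a + c + (b + d) := by
  have : 0 < b := Nat.pos_of_ne_zero (by rintro rfl; simp at h)
  omega

theorem parents_ne_of_det {a b c d : ℕ} (h : c * b = a * d + 1) : (a, b) ≠ (c, d) := by
  rintro ⟨⟩
  rw [mul_comm] at h
  omega

theorem eq_of_parent_recursion {M : Type*} [Add M] {n : ℕ} {j₁ j₂ μ : ℕ → ℕ}
    (hj₁ : ∀ i, 1 ≤ i → i ≤ n → j₁ i ≤ n + 1) (hj₂ : ∀ i, 1 ≤ i → i ≤ n → j₂ i ≤ n + 1)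
    (hμ : ∀ i, 1 ≤ i → i ≤ n → μ (j₁ i) < μ i ∧ μ (j₂ i) < μ i)
    {c f g : ℕ → M} (h0 : f 0 = g 0) (htop : f (n + 1) = g (n + 1))
    (hf : ∀ i, 1 ≤ i → i ≤ n → f i = f (j₁ i) + f (j₂ i) + c i)
    (hg : ∀ i, 1 ≤ i → i ≤ n → g i = g (j₁ i) + g (j₂ i) + c i) :
    ∀ k ≤ n + 1, f k = g k := by
  intro k hk
  induction hm : μ k using Nat.strong_induction_on generalizing k with
  | _ m ih =>
    rcases Nat.eq_zero_or_pos k with rfl | hk0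
    · exact h0
    rcases hk.eq_or_lt with rfl | hlt
    · exact htop
    have hkn : k ≤ n := by omega
    obtain ⟨hμ₁, hμ₂⟩ := hμ k hk0 hkn
    rw [hf k hk0 hkn, hg k hk0 hkn, ih _ (hm ▸ hμ₁) _ (hj₁ k hk0 hkn) rfl,
      ih _ (hm ▸ hμ₂) _ (hj₂ k hk0 hkn) rfl]

theorem sum_pi_single_one_mul {ι R : Type*} [DecidableEq ι] [NonAssocSemiring R]
    {S : Finset ι} {i : ι} (hi : i ∈ S) (s : ι → R) :
    ∑ t ∈ S, (Pi.single i 1 : ι → R) t * s t = s i := by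
  rw [sum_eq_single_of_mem i hi (fun t _ hti => by simp [Pi.single_eq_of_ne hti])]
  simp

/-- The closed form of `⟨w_k, s_j⟩`, extended to `k = 0` and `k = n + 1`, where it vanishes. -/
def weightDotSigmaFormula (p q : ℕ → ℕ) (n j k : ℕ) : ℤ :=
  (if j = 0 then (q k : ℤ) else 0) + (if j = n + 1 then (p k : ℤ) else 0) - if j = k then 1 else 0

section weightDotSigmaFormula

variable {p q : ℕ → ℕ} {n j : ℕ}

theorem weightDotSigmaFormula_zero (hp0 : p 0 = 0) (hq0 : q 0 = 1) :
    weightDotSigmaFormula p q n j 0 = 0 := by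
  unfold weightDotSigmaFormula
  split_ifs <;> simp_all

theorem weightDotSigmaFormula_top (hpn : p (n + 1) = 1) (hqn : q (n + 1) = 0) :
    weightDotSigmaFormula p q n j (n + 1) = 0 := by
  unfold weightDotSigmaFormula
  split_ifs <;> simp_all

theorem weightDotSigmaFormula_parent {i a b : ℕ} (hp : p a + p b = p i) (hq : q a + q b = q i)
    (hai : a ≠ i) (hbi : b ≠ i) (hab : a ≠ b) :
    weightDotSigmaFormula p q n j i =
      weightDotSigmaFormula p q n j a + weightDotSigmaFormula p q n j b +
        if j = i then -1 else if j = a ∨ j = b then 1 else 0 := by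
  unfold weightDotSigmaFormula
  rw [← hp, ← hq]
  push_cast
  split_ifs <;> omega

theorem weightDotSigmaFormula_of_pos_of_le {k : ℕ} (hk : 1 ≤ k) (hkn : k ≤ n) :
    weightDotSigmaFormula p q n j k =
      if j = k then -1 else if j = 0 then (q k : ℤ) else if j = n + 1 then (p k : ℤ) else 0 := by
  unfold weightDotSigmaFormula
  split_ifs <;> omega

end weightDotSigmaFormula

theorem weight_dot_sigma_general (n : ℕ) (p q : ℕ → ℕ)
    (hp0 : p 0 = 0) (hq0 : q 0 = 1)
    (hpn : p (n + 1) = 1) (hqn : q (n + 1) = 0)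
    (j₁ j₂ : ℕ → ℕ)
    (hj₁ : ∀ i, 1 ≤ i → i ≤ n → j₁ i ≤ n + 1)
    (hj₂ : ∀ i, 1 ≤ i → i ≤ n → j₂ i ≤ n + 1)
    (hparent : ∀ i, 1 ≤ i → i ≤ n →
      p (j₁ i) + p (j₂ i) = p i ∧ q (j₁ i) + q (j₂ i) = q i ∧
        p i * q (j₁ i) = p (j₁ i) * q i + 1)
    (w : ℕ → ℕ → ℤ)
    (hw0 : w 0 = 0) (hwtop : w (n + 1) = 0)
    (hw : ∀ i, 1 ≤ i → i ≤ n → w i = w (j₁ i) + w (j₂ i) + Pi.single i 1)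
    (s : ℕ → ℕ → ℤ)
    (hs : ∀ j t, 1 ≤ t → t ≤ n →
      s j t = if j = t then -1 else if j = j₁ t ∨ j = j₂ t then 1 else 0) :
    ∀ i j, 1 ≤ i → i ≤ n → j ≤ n + 1 →
      (∑ t ∈ Finset.Icc 1 n, w i t * s j t) =
        if j = i then -1
        else if j = 0 then (q i : ℤ)
        else if j = n + 1 then (p i : ℤ)
        else 0 := by
  intro i j hi hin _
  have hdet : ∀ k, 1 ≤ k → k ≤ n →
      p (j₂ k) * q (j₁ k) = p (j₁ k) * q (j₂ k) + 1 := fun k hk hkn => by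
    obtain ⟨hpk, hqk, hdetk⟩ := hparent k hk hkn
    rw [← hpk, ← hqk] at hdetk
    exact mediant_det_parents hdetk
  have hμ : ∀ k, 1 ≤ k → k ≤ n →
      p (j₁ k) + q (j₁ k) < p k + q k ∧ p (j₂ k) + q (j₂ k) < p k + q k := fun k hk hkn => by
    obtain ⟨hpk, hqk, -⟩ := hparent k hk hkn
    rw [← hpk, ← hqk]
    exact ⟨add_lt_mediant_left (hdet k hk hkn), add_lt_mediant_right (hdet k hk hkn)⟩
  have hdot := eq_of_parent_recursion (μ := fun k => p k + q k) hj₁ hj₂ hμ (c := s j)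
    (f := fun k => ∑ t ∈ Icc 1 n, w k t * s j t) (g := weightDotSigmaFormula p q n j)
    (by simp [hw0, weightDotSigmaFormula_zero hp0 hq0])
    (by simp [hwtop, weightDotSigmaFormula_top hpn hqn])
    (fun k hk hkn => by
      simp only [hw k hk hkn, Pi.add_apply, add_mul, sum_add_distrib,
        sum_pi_single_one_mul (mem_Icc.2 ⟨hk, hkn⟩)])
    (fun k hk hkn => by
      obtain ⟨hpk, hqk, -⟩ := hparent k hk hkn
      have hne := parents_ne_of_det (hdet k hk hkn)
      exact (hs j k hk hkn).symm ▸ weightDotSigmaFormula_parent hpk hqk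
        (ne_of_apply_ne (fun k => p k + q k) (hμ k hk hkn).1.ne)
        (ne_of_apply_ne (fun k => p k + q k) (hμ k hk hkn).2.ne)
        (ne_of_apply_ne (fun k => (p k, q k)) hne))
  rw [hdot i (by omega), weightDotSigmaFormula_of_pos_of_le hi hin]

/-- For a Farey chain with a parent assignment, weight vectors `w_i`
and Σ-vectors `s_j` (coordinates indexed by `1 ≤ t ≤ n`, with standard dot
product), one has `⟨w_i, s_j⟩ = -1` if `j = i`, `q i` if `j = 0`, `p i` if
`j = n+1`, and `0` otherwise. -/
theorem weight_dot_sigma (n : ℕ) (hn : 1 ≤ n) (p q : ℕ → ℕ)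
    (hp0 : p 0 = 0) (hq0 : q 0 = 1)
    (hpn : p (n + 1) = 1) (hqn : q (n + 1) = 0)
    (hfarey : ∀ i ≤ n, p (i + 1) * q i = p i * q (i + 1) + 1)
    (j₁ j₂ : ℕ → ℕ)
    (hj₁ : ∀ i, 1 ≤ i → i ≤ n → j₁ i ≤ n + 1)
    (hj₂ : ∀ i, 1 ≤ i → i ≤ n → j₂ i ≤ n + 1)
    (hparent : ∀ i, 1 ≤ i → i ≤ n →
      p (j₁ i) + p (j₂ i) = p i ∧ q (j₁ i) + q (j₂ i) = q i ∧
        p i * q (j₁ i) = p (j₁ i) * q i + 1)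
    (w : ℕ → ℕ → ℤ)
    (hw0 : w 0 = 0) (hwtop : w (n + 1) = 0)
    (hw : ∀ i, 1 ≤ i → i ≤ n → w i = w (j₁ i) + w (j₂ i) + Pi.single i 1)
    (s : ℕ → ℕ → ℤ)
    (hs : ∀ j t, 1 ≤ t → t ≤ n →
      s j t = if j = t then -1 else if j = j₁ t ∨ j = j₂ t then 1 else 0) :
    ∀ i j, 1 ≤ i → i ≤ n → j ≤ n + 1 →
      (∑ t ∈ Finset.Icc 1 n, w i t * s j t) =
        if j = i then -1
        else if j = 0 then (q i : ℤ)
        else if j = n + 1 then (p i : ℤ)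
        else 0 :=
  weight_dot_sigma_general n p q hp0 hq0 hpn hqn j₁ j₂ hj₁ hj₂ hparent w hw0 hwtop hw s hs
end

section
/- Let n ≥ 1, let (p, q) be a Farey chain of length n equipped with a parent assignment (j₁, j₂), and let (s_j)_{0 ≤ j ≤ n+1} be the associated Σ-vectors in ℤⁿ. Then: (1) ⟨s_j, s_j⟩ = p (j+1) * q (j−1) − p (j−1) * q (j+1) for every 1 ≤ j ≤ n; (2) ⟨s_0, s_0⟩ = q 1 and ⟨s_{n+1}, s_{n+1}⟩ = p n; (3) ⟨s_j, s_{j+1}⟩ = −1 for every 0 ≤ j ≤ n; (4) ⟨s_0, s_{n+1}⟩ = 1; (5) ⟨s_j, s_l⟩ = 0 whenever 0 ≤ j < l ≤ n+1, l − j ≥ 2, and (j, l) ≠ (0, n+1). -/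
/-!
Write `v i = (p i, q i)` and `det a b` for the determinant of `v a` and `v b`. The Farey condition
makes `det a b > 0` whenever `b < a ≤ n + 1`, so the `v i` are distinct, and a parent of `t` is the
unique chain index `x` with `det t x = ±1` and `v x ≤ v t` componentwise.

For `j < l`, `⟨s j, s l⟩` is the number of `t` with parents `j` and `l`, minus `[j₂ j = l]`, minus
`[j₁ l = j]`. All three terms vanish unless `det l j = 1`. In that case one of `v j`, `v l` lies
below the other (except for the pair `0`, `n + 1`), so exactly one of the last two indicators is
`1`; and `v j + v l` occurs in the chain, necessarily with parents `j` and `l`, iff `l ≥ j + 2`.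

The diagonal then comes from the relations `∑ j, p j • s j = ∑ j, q j • s j = 0`, which restate
`v t = v (j₁ t) + v (j₂ t)`: pairing them with `s i` gives
`⟨s i, s i⟩ • v i = v (i - 1) + v (i + 1)` for `1 ≤ i ≤ n`, hence
`⟨s i, s i⟩ = det (i + 1) (i - 1)`; similarly at the two ends.
-/

open Finset

theorem sum_eq_add_add_of_mem {ι M : Type*} [DecidableEq ι] [AddCommMonoid M]
    {s : Finset ι} {f : ι → M} {a b c : ι} (ha : a ∈ s) (hb : b ∈ s) (hc : c ∈ s) (hab : a ≠ b)
    (hac : a ≠ c) (hbc : b ≠ c) (h : ∀ x ∈ s, x ≠ a → x ≠ b → x ≠ c → f x = 0) :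
    ∑ x ∈ s, f x = f a + f b + f c := by
  rw [← sum_subset (s₁ := {a, b, c}) (by simp [insert_subset_iff, ha, hb, hc])
    fun x hx hx' => h x hx (by simp_all) (by simp_all) (by simp_all),
    sum_insert (by simp [hab, hac]), sum_pair hbc, add_assoc]

def det (p q : ℕ → ℕ) (a b : ℕ) : ℤ := p a * q b - p b * q a

theorem det_self (p q : ℕ → ℕ) (a : ℕ) : det p q a a = 0 := by
  unfold det; ring

theorem det_swap (p q : ℕ → ℕ) (a b : ℕ) : det p q b a = -det p q a b := by
  unfold det; ring

theorem eq_of_det_eq_of_le {p q : ℕ → ℕ} {t x y : ℕ} (hxy : det p q t x = det p q t y)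
    (hunit : IsUnit (det p q t y)) (hpx : p x ≤ p t) (hqx : q x ≤ q t)
    (hpy : p y ≤ p t) (hqy : q y ≤ q t) : p x = p y ∧ q x = q y := by
  obtain ⟨ε, hy, hε⟩ : ∃ ε, det p q t y = ε ∧ ε * ε = 1 :=
    ⟨_, rfl, by rcases Int.isUnit_iff.mp hunit with h | h <;> rw [h] <;> norm_num⟩
  rw [hy] at hxy
  unfold det at hxy hy
  -- `v x - v y` is an integer multiple of `v t`, which is primitive as `det t y = ±1`
  obtain ⟨k, hp, hq⟩ : ∃ k : ℤ, (p x : ℤ) - p y = k * p t ∧ (q x : ℤ) - q y = k * q t :=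
    ⟨ε * (p x * q y - p y * q x),
      by linear_combination (ε * p y) * hxy - (ε * p x) * hy - (p x - p y : ℤ) * hε,
      by linear_combination (ε * q y) * hxy - (ε * q x) * hy - (q x - q y : ℤ) * hε⟩
  zify at hpx hqx hpy hqy
  have hk : k = 0 := by
    rcases lt_trichotomy k 0 with hk | hk | hk
    · have h1 : (p y : ℤ) = p t := by nlinarith [(p x).cast_nonneg (α := ℤ)]
      have h2 : (q y : ℤ) = q t := by nlinarith [(q x).cast_nonneg (α := ℤ)]
      rw [h1, h2] at hy; nlinarith
    · exact hk
    · have h1 : (p y : ℤ) = 0 := by nlinarith [(p y).cast_nonneg (α := ℤ)]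
      have h2 : (q y : ℤ) = 0 := by nlinarith [(q y).cast_nonneg (α := ℤ)]
      rw [h1, h2] at hy; nlinarith
  subst hk
  omega

theorem le_or_le_of_det_eq_one {a b c d : ℕ} (h : (c : ℤ) * b - a * d = 1) :
    (a ≤ c ∧ b ≤ d) ∨ (c ≤ a ∧ d ≤ b) ∨ (a = 0 ∧ d = 0) := by
  rcases le_or_gt a c with hac | hca <;> rcases le_or_gt b d with hbd | hdb
  · exact Or.inl ⟨hac, hbd⟩
  · rcases eq_or_lt_of_le hac with rfl | hac
    · exact Or.inr (Or.inl ⟨le_rfl, hdb.le⟩)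
    · have : (a : ℤ) + 1 ≤ c := by exact_mod_cast hac
      have : (d : ℤ) + 1 ≤ b := by exact_mod_cast hdb
      right; right; constructor <;> nlinarith
  · rcases eq_or_lt_of_le hbd with rfl | hbd
    · exact Or.inr (Or.inl ⟨hca.le, le_rfl⟩)
    · have : (c : ℤ) + 1 ≤ a := by exact_mod_cast hca
      have : (b : ℤ) + 1 ≤ d := by exact_mod_cast hbd
      nlinarith
  · exact Or.inr (Or.inl ⟨hca.le, hdb.le⟩)

theorem eq_one_or_of_mul_sub_mul_eq_one {a b c d : ℤ} (hb : 0 ≤ b) (hba : b < a) (hc : 0 ≤ c)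
    (hcd : c ≤ d) (h : a * d - b * c = 1) : (c = 1 ∧ d = 1) ∨ (c = 0 ∧ b = 0) := by
  rcases eq_or_lt_of_le hc with rfl | hc
  · have hd : 1 ≤ d := by nlinarith
    right; refine ⟨rfl, ?_⟩; nlinarith
  · left; constructor <;> nlinarith

structure IsFareyChain (n : ℕ) (p q : ℕ → ℕ) : Prop where
  p_zero : p 0 = 0
  q_zero : q 0 = 1
  p_last : p (n + 1) = 1
  q_last : q (n + 1) = 0
  farey : ∀ i ≤ n, p (i + 1) * q i = p i * q (i + 1) + 1

namespace IsFareyChain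

variable {n : ℕ} {p q : ℕ → ℕ}

theorem det_succ (hF : IsFareyChain n p q) {i : ℕ} (hi : i ≤ n) : det p q (i + 1) i = 1 := by
  have h : (p (i + 1) * q i : ℤ) = p i * q (i + 1) + 1 := by exact_mod_cast hF.farey i hi
  unfold det; linarith

theorem det_last_zero (hF : IsFareyChain n p q) : det p q (n + 1) 0 = 1 := by
  simp [det, hF.p_zero, hF.q_zero, hF.p_last, hF.q_last]

theorem q_pos (hF : IsFareyChain n p q) {i : ℕ} (hi : i ≤ n) : 0 < q i := by
  have h := hF.farey i hi
  exact Nat.pos_of_ne_zero fun h0 => by simp [h0] at h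

theorem p_pos (hF : IsFareyChain n p q) {i : ℕ} (hi : 1 ≤ i) (hi' : i ≤ n + 1) : 0 < p i := by
  obtain ⟨k, rfl⟩ : ∃ k, i = k + 1 := ⟨i - 1, by omega⟩
  have h := hF.farey k (by omega)
  exact Nat.pos_of_ne_zero fun h0 => by simp [h0] at h

theorem det_pos (hF : IsFareyChain n p q) {a b : ℕ} (hba : b < a) (ha : a ≤ n + 1) :
    0 < det p q a b := by
  induction a, hba using Nat.le_induction with
  | base => rw [hF.det_succ (by omega)]; exact one_pos
  | succ a hba ih =>
    have key : (q a : ℤ) * det p q (a + 1) b =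
        q b * det p q (a + 1) a + q (a + 1) * det p q a b := by
      unfold det; ring
    rw [hF.det_succ (by omega)] at key
    have hqa : (0 : ℤ) < q a := by exact_mod_cast hF.q_pos (by omega)
    have hqb : (0 : ℤ) < q b := by exact_mod_cast hF.q_pos (by omega)
    have := ih (by omega)
    nlinarith

theorem det_nonneg (hF : IsFareyChain n p q) {a b : ℕ} (hba : b ≤ a) (ha : a ≤ n + 1) :
    0 ≤ det p q a b := by
  rcases eq_or_lt_of_le hba with rfl | hba
  · rw [det_self]
  · exact (hF.det_pos hba ha).le

theorem lt_of_det_pos (hF : IsFareyChain n p q) {a b : ℕ} (hb : b ≤ n + 1)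
    (h : 0 < det p q a b) : b < a := by
  by_contra! hab
  have := hF.det_nonneg hab hb
  rw [det_swap] at this
  omega

theorem eq_of_p_eq_of_q_eq (hF : IsFareyChain n p q) {a b : ℕ} (ha : a ≤ n + 1) (hb : b ≤ n + 1)
    (hp : p a = p b) (hq : q a = q b) : a = b := by
  have h0 : det p q a b = 0 := by unfold det; rw [hp, hq]; ring
  rcases lt_trichotomy a b with h | h | h
  · have := hF.det_pos h hb; rw [det_swap] at this; omega
  · exact h
  · have := hF.det_pos h ha; omega

theorem succ_eq_mediant_of_crossing (hF : IsFareyChain n p q) {j k l : ℕ} (hjk : j ≤ k)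
    (hkl : k < l) (hjl : j + 2 ≤ l) (hl : l ≤ n + 1) (hD : det p q l j = 1)
    (hbelow : det p q k j < det p q l k) (habove : det p q l (k + 1) ≤ det p q (k + 1) j) :
    k + 1 < l ∧ p (k + 1) = p j + p l ∧ q (k + 1) = q j + q l := by
  have hcross : det p q l k * det p q (k + 1) j - det p q k j * det p q l (k + 1) = 1 := by
    rw [← hF.det_succ (i := k) (by omega), ← mul_one (det p q (k + 1) k), ← hD]
    unfold det; ring
  rcases eq_one_or_of_mul_sub_mul_eq_one (hF.det_nonneg hjk (by omega)) hbelow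
    (hF.det_nonneg hkl hl) habove hcross with ⟨hc, hd⟩ | ⟨hc, hb⟩
  · have hp : det p q l j * p (k + 1) = det p q l (k + 1) * p j + det p q (k + 1) j * p l := by
      unfold det; ring
    have hq : det p q l j * q (k + 1) = det p q l (k + 1) * q j + det p q (k + 1) j * q l := by
      unfold det; ring
    rw [hD, hc, hd] at hp hq
    refine ⟨lt_of_le_of_ne hkl ?_, by linarith, by linarith⟩
    rintro rfl
    simp [det_self] at hc
  · have hkl' : k + 1 = l := by
      by_contra hne; have := hF.det_pos (lt_of_le_of_ne hkl hne) hl; omega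
    have hjk' : k = j := by
      by_contra hne; have := hF.det_pos (lt_of_le_of_ne hjk (Ne.symm hne)) (by omega); omega
    omega

-- In the basis `(v j, v l)` the vector `v k` has coordinates `(det l k, det k j)`; these run from
-- `(1, 0)` to `(0, 1)` with consecutive determinants `1`, so they cross the diagonal at `(1, 1)`.
theorem exists_mediant (hF : IsFareyChain n p q) {j l : ℕ} (hjl : j + 2 ≤ l) (hl : l ≤ n + 1)
    (hD : det p q l j = 1) : ∃ k, j < k ∧ k < l ∧ p k = p j + p l ∧ q k = q j + q l := by
  have key : ∀ k, j ≤ k → k ≤ l → (∃ k, j < k ∧ k < l ∧ p k = p j + p l ∧ q k = q j + q l) ∨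
      det p q k j < det p q l k := by
    intro k hjk
    induction k, hjk using Nat.le_induction with
    | base => intro _; right; rw [det_self, hD]; exact one_pos
    | succ k hjk ih =>
      intro hkl
      rcases ih (by omega) with h | hbelow
      · exact Or.inl h
      by_cases habove : det p q (k + 1) j < det p q l (k + 1)
      · exact Or.inr habove
      obtain ⟨hkl', hp, hq⟩ :=
        hF.succ_eq_mediant_of_crossing hjk hkl hjl hl hD hbelow (not_lt.mp habove)
      exact Or.inl ⟨k + 1, by omega, hkl', hp, hq⟩
  rcases key l (by omega) le_rfl with h | h
  · exact h
  · rw [det_self, hD] at h; exact absurd h (by norm_num)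

end IsFareyChain

structure IsParentAssignment (n : ℕ) (p q j₁ j₂ : ℕ → ℕ) : Prop where
  left_le : ∀ i, 1 ≤ i → i ≤ n → j₁ i ≤ n + 1
  right_le : ∀ i, 1 ≤ i → i ≤ n → j₂ i ≤ n + 1
  parent : ∀ i, 1 ≤ i → i ≤ n →
    p (j₁ i) + p (j₂ i) = p i ∧ q (j₁ i) + q (j₂ i) = q i ∧ p i * q (j₁ i) = p (j₁ i) * q i + 1

namespace IsParentAssignment

variable {n : ℕ} {p q j₁ j₂ : ℕ → ℕ} {t : ℕ}

theorem det_left (hP : IsParentAssignment n p q j₁ j₂) (ht : 1 ≤ t) (ht' : t ≤ n) :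
    det p q t (j₁ t) = 1 := by
  have h : (p t * q (j₁ t) : ℤ) = p (j₁ t) * q t + 1 := by exact_mod_cast (hP.parent t ht ht').2.2
  unfold det; linarith

theorem det_right_left (hP : IsParentAssignment n p q j₁ j₂) (ht : 1 ≤ t) (ht' : t ≤ n) :
    det p q (j₂ t) (j₁ t) = 1 := by
  obtain ⟨hp, hq, -⟩ := hP.parent t ht ht'
  rw [← hP.det_left ht ht']
  unfold det; rw [← hp, ← hq]; push_cast; ring

theorem det_right (hP : IsParentAssignment n p q j₁ j₂) (ht : 1 ≤ t) (ht' : t ≤ n) :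
    det p q (j₂ t) t = 1 := by
  obtain ⟨hp, hq, -⟩ := hP.parent t ht ht'
  rw [← hP.det_right_left ht ht']
  unfold det; rw [← hp, ← hq]; push_cast; ring

theorem left_le_self (hP : IsParentAssignment n p q j₁ j₂) (ht : 1 ≤ t) (ht' : t ≤ n) :
    p (j₁ t) ≤ p t ∧ q (j₁ t) ≤ q t := by
  obtain ⟨hp, hq, -⟩ := hP.parent t ht ht'; omega

theorem right_le_self (hP : IsParentAssignment n p q j₁ j₂) (ht : 1 ≤ t) (ht' : t ≤ n) :
    p (j₂ t) ≤ p t ∧ q (j₂ t) ≤ q t := by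
  obtain ⟨hp, hq, -⟩ := hP.parent t ht ht'; omega

theorem left_lt (hF : IsFareyChain n p q) (hP : IsParentAssignment n p q j₁ j₂) (ht : 1 ≤ t)
    (ht' : t ≤ n) : j₁ t < t :=
  hF.lt_of_det_pos (hP.left_le t ht ht') (by rw [hP.det_left ht ht']; exact one_pos)

theorem lt_right (hF : IsFareyChain n p q) (hP : IsParentAssignment n p q j₁ j₂) (ht : 1 ≤ t)
    (ht' : t ≤ n) : t < j₂ t :=
  hF.lt_of_det_pos (by omega) (by rw [hP.det_right ht ht']; exact one_pos)

theorem eq_left_of_det (hF : IsFareyChain n p q) (hP : IsParentAssignment n p q j₁ j₂)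
    (ht : 1 ≤ t) (ht' : t ≤ n) {x : ℕ} (hx : x ≤ n + 1) (hD : det p q t x = 1)
    (hp : p x ≤ p t) (hq : q x ≤ q t) : x = j₁ t := by
  have hleft := hP.det_left ht ht'
  obtain ⟨hpx, hqx⟩ := eq_of_det_eq_of_le (hD.trans hleft.symm) (by rw [hleft]; exact isUnit_one)
    hp hq (hP.left_le_self ht ht').1 (hP.left_le_self ht ht').2
  exact hF.eq_of_p_eq_of_q_eq hx (hP.left_le t ht ht') hpx hqx

theorem eq_right_of_det (hF : IsFareyChain n p q) (hP : IsParentAssignment n p q j₁ j₂)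
    (ht : 1 ≤ t) (ht' : t ≤ n) {x : ℕ} (hx : x ≤ n + 1) (hD : det p q x t = 1)
    (hp : p x ≤ p t) (hq : q x ≤ q t) : x = j₂ t := by
  have hright : det p q t (j₂ t) = -1 := by rw [det_swap, hP.det_right ht ht']
  obtain ⟨hpx, hqx⟩ := eq_of_det_eq_of_le (by rw [det_swap, hD, hright])
    (by rw [hright]; exact isUnit_one.neg) hp hq (hP.right_le_self ht ht').1
    (hP.right_le_self ht ht').2
  exact hF.eq_of_p_eq_of_q_eq hx (hP.right_le t ht ht') hpx hqx

end IsParentAssignment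

def sigma (j₁ j₂ : ℕ → ℕ) (j t : ℕ) : ℤ :=
  if j = t then -1 else if j = j₁ t ∨ j = j₂ t then 1 else 0

def sigmaDot (n : ℕ) (j₁ j₂ : ℕ → ℕ) (j l : ℕ) : ℤ :=
  ∑ t ∈ Icc 1 n, sigma j₁ j₂ j t * sigma j₁ j₂ l t

theorem sigmaDot_comm (n : ℕ) (j₁ j₂ : ℕ → ℕ) (j l : ℕ) :
    sigmaDot n j₁ j₂ j l = sigmaDot n j₁ j₂ l j := by
  simp only [sigmaDot, mul_comm]

theorem mul_sigma_eq {j₁ j₂ : ℕ → ℕ} {t : ℕ} (h₁ : j₁ t < t) (h₂ : t < j₂ t) (w : ℕ → ℤ) (j : ℕ) :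
    w j * sigma j₁ j₂ j t =
      (if j = j₁ t then w j else 0) + (if j = j₂ t then w j else 0) -
        (if j = t then w j else 0) := by
  unfold sigma; split_ifs <;> omega

theorem sigma_mul_sigma_of_lt {j₁ j₂ : ℕ → ℕ} {t : ℕ} (h₁ : j₁ t < t) (h₂ : t < j₂ t) {j l : ℕ}
    (hjl : j < l) : sigma j₁ j₂ j t * sigma j₁ j₂ l t =
      (if j₁ t = j ∧ j₂ t = l then 1 else 0) - ((if j = t then (if j₂ t = l then 1 else 0) else 0) +
        (if l = t then (if j₁ t = j then 1 else 0) else 0)) := by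
  unfold sigma; split_ifs <;> omega

namespace IsParentAssignment

variable {n : ℕ} {p q j₁ j₂ : ℕ → ℕ}

theorem sum_mul_sigma_eq_zero (hF : IsFareyChain n p q) (hP : IsParentAssignment n p q j₁ j₂)
    {w : ℕ → ℤ} (hw : ∀ t, 1 ≤ t → t ≤ n → w (j₁ t) + w (j₂ t) = w t) {t : ℕ} (ht : 1 ≤ t)
    (ht' : t ≤ n) : ∑ l ∈ range (n + 2), w l * sigma j₁ j₂ l t = 0 := by
  have hmem : ∀ x ≤ n + 1, x ∈ range (n + 2) := fun x hx => mem_range.mpr (by omega)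
  simp only [mul_sigma_eq (hP.left_lt hF ht ht') (hP.lt_right hF ht ht'), sum_add_distrib,
    sum_sub_distrib, sum_ite_eq', hmem _ (hP.left_le t ht ht'), hmem _ (hP.right_le t ht ht'),
    hmem t (by omega), if_true, hw t ht ht', sub_self]

theorem sum_mul_sigmaDot_eq_zero (hF : IsFareyChain n p q) (hP : IsParentAssignment n p q j₁ j₂)
    {w : ℕ → ℤ} (hw : ∀ t, 1 ≤ t → t ≤ n → w (j₁ t) + w (j₂ t) = w t) (j : ℕ) :
    ∑ l ∈ range (n + 2), w l * sigmaDot n j₁ j₂ j l = 0 := by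
  calc ∑ l ∈ range (n + 2), w l * sigmaDot n j₁ j₂ j l
      = ∑ t ∈ Icc 1 n, sigma j₁ j₂ j t * ∑ l ∈ range (n + 2), w l * sigma j₁ j₂ l t := by
        simp only [sigmaDot, mul_sum]; rw [sum_comm]; congr! 2; ring
    _ = 0 := sum_eq_zero fun t ht => by
        rw [mem_Icc] at ht; rw [hP.sum_mul_sigma_eq_zero hF hw ht.1 ht.2, mul_zero]

theorem sigmaDot_eq_of_lt (hF : IsFareyChain n p q) (hP : IsParentAssignment n p q j₁ j₂)
    {j l : ℕ} (hjl : j < l) : sigmaDot n j₁ j₂ j l =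
      (∑ t ∈ Icc 1 n, if j₁ t = j ∧ j₂ t = l then 1 else 0) -
        ((if j ∈ Icc 1 n then (if j₂ j = l then 1 else 0) else 0) +
          (if l ∈ Icc 1 n then (if j₁ l = j then 1 else 0) else 0)) := by
  rw [sigmaDot, sum_congr rfl fun t ht => sigma_mul_sigma_of_lt (hP.left_lt hF (mem_Icc.mp ht).1
    (mem_Icc.mp ht).2) (hP.lt_right hF (mem_Icc.mp ht).1 (mem_Icc.mp ht).2) hjl, sum_sub_distrib,
    sum_add_distrib, sum_ite_eq, sum_ite_eq]

theorem sum_ite_parents_eq (hF : IsFareyChain n p q) (hP : IsParentAssignment n p q j₁ j₂)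
    {j l : ℕ} (hl : l ≤ n + 1) :
    (∑ t ∈ Icc 1 n, if j₁ t = j ∧ j₂ t = l then 1 else 0 : ℤ) =
      if det p q l j = 1 ∧ j + 2 ≤ l then 1 else 0 := by
  split_ifs with h
  · obtain ⟨k, hjk, hkl, hpk, hqk⟩ := hF.exists_mediant h.2 hl h.1
    have hk : 1 ≤ k ∧ k ≤ n := by omega
    have hkj : det p q k j = 1 := by rw [← h.1]; unfold det; rw [hpk, hqk]; push_cast; ring
    have hlk : det p q l k = 1 := by rw [← h.1]; unfold det; rw [hpk, hqk]; push_cast; ring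
    have hleft := hP.eq_left_of_det hF hk.1 hk.2 (by omega) hkj (by omega) (by omega)
    have hright := hP.eq_right_of_det hF hk.1 hk.2 hl hlk (by omega) (by omega)
    rw [sum_eq_single_of_mem k (mem_Icc.mpr hk), if_pos ⟨hleft.symm, hright.symm⟩]
    intro t ht htk
    rw [mem_Icc] at ht
    refine if_neg fun ⟨htj, htl⟩ => htk (hF.eq_of_p_eq_of_q_eq (by omega) (by omega) ?_ ?_)
    all_goals
      obtain ⟨hp, hq, -⟩ := hP.parent t ht.1 ht.2
      rw [htj, htl] at hp hq
      omega
  · refine sum_eq_zero fun t ht => if_neg ?_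
    rintro ⟨rfl, rfl⟩
    rw [mem_Icc] at ht
    have := hP.left_lt hF ht.1 ht.2
    have := hP.lt_right hF ht.1 ht.2
    exact h ⟨hP.det_right_left ht.1 ht.2, by omega⟩

theorem left_parent_of_le (hF : IsFareyChain n p q) (hP : IsParentAssignment n p q j₁ j₂)
    {j l : ℕ} (hjl : j < l) (hl : l ≤ n + 1) (hD : det p q l j = 1) (hp : p j ≤ p l)
    (hq : q j ≤ q l) : ((1 ≤ l ∧ l ≤ n) ∧ j₁ l = j) ∧ ¬((1 ≤ j ∧ j ≤ n) ∧ j₂ j = l) := by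
  have hln : l ≤ n := by
    by_contra hln
    rw [show l = n + 1 by omega, hF.q_last] at hq
    have := hF.q_pos (i := j) (by omega)
    omega
  refine ⟨⟨⟨by omega, hln⟩, (hP.eq_left_of_det hF (by omega) hln (by omega) hD hp hq).symm⟩, ?_⟩
  rintro ⟨hj, hjl'⟩
  have := hP.right_le_self hj.1 hj.2
  rw [hjl'] at this
  have := hF.eq_of_p_eq_of_q_eq (a := j) (by omega) hl (by omega) (by omega)
  omega

theorem right_parent_of_le (hF : IsFareyChain n p q) (hP : IsParentAssignment n p q j₁ j₂)
    {j l : ℕ} (hjl : j < l) (hl : l ≤ n + 1) (hD : det p q l j = 1) (hp : p l ≤ p j)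
    (hq : q l ≤ q j) : ((1 ≤ j ∧ j ≤ n) ∧ j₂ j = l) ∧ ¬((1 ≤ l ∧ l ≤ n) ∧ j₁ l = j) := by
  have hj : 1 ≤ j := by
    by_contra hj
    rw [show j = 0 by omega, hF.p_zero] at hp
    have := hF.p_pos (i := l) (by omega) hl
    omega
  refine ⟨⟨⟨hj, by omega⟩, (hP.eq_right_of_det hF hj (by omega) hl hD hp hq).symm⟩, ?_⟩
  rintro ⟨hl', hlj⟩
  have := hP.left_le_self hl'.1 hl'.2
  rw [hlj] at this
  have := hF.eq_of_p_eq_of_q_eq (a := j) (by omega) hl (by omega) (by omega)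
  omega

theorem ite_parent_add_ite_parent_eq (hF : IsFareyChain n p q)
    (hP : IsParentAssignment n p q j₁ j₂) {j l : ℕ} (hjl : j < l) (hl : l ≤ n + 1) :
    ((if j ∈ Icc 1 n then (if j₂ j = l then 1 else 0) else 0) +
        (if l ∈ Icc 1 n then (if j₁ l = j then 1 else 0) else 0) : ℤ) =
      if det p q l j = 1 ∧ (j, l) ≠ (0, n + 1) then 1 else 0 := by
  simp only [← ite_and, mem_Icc]
  by_cases hD : det p q l j = 1
  · have hD' := hD
    unfold det at hD'
    rcases le_or_le_of_det_eq_one hD' with ⟨hp, hq⟩ | ⟨hp, hq⟩ | ⟨hp, hq⟩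
    · obtain ⟨hleft, hright⟩ := hP.left_parent_of_le hF hjl hl hD hp hq
      rw [if_neg hright, if_pos hleft, if_pos ⟨hD, by simp; omega⟩, zero_add]
    · obtain ⟨hright, hleft⟩ := hP.right_parent_of_le hF hjl hl hD hp hq
      rw [if_pos hright, if_neg hleft, if_pos ⟨hD, by simp; omega⟩, add_zero]
    · have hj : j = 0 := by
        by_contra hj
        have := hF.p_pos (i := j) (by omega) (by omega)
        omega
      have hl' : l = n + 1 := by
        by_contra hl'
        have := hF.q_pos (i := l) (by omega)
        omega
      rw [if_neg (by omega), if_neg (by omega), if_neg (by simp [hj, hl']), add_zero]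
  · have hright : ¬((1 ≤ j ∧ j ≤ n) ∧ j₂ j = l) := by
      rintro ⟨hj, rfl⟩
      exact hD (hP.det_right hj.1 hj.2)
    have hleft : ¬((1 ≤ l ∧ l ≤ n) ∧ j₁ l = j) := by
      rintro ⟨hl', rfl⟩
      exact hD (hP.det_left hl'.1 hl'.2)
    rw [if_neg hright, if_neg hleft, if_neg fun h => hD h.1, add_zero]

theorem sigmaDot_of_lt (hF : IsFareyChain n p q) (hP : IsParentAssignment n p q j₁ j₂)
    {j l : ℕ} (hjl : j < l) (hl : l ≤ n + 1) : sigmaDot n j₁ j₂ j l =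
      (if det p q l j = 1 ∧ j + 2 ≤ l then 1 else 0) -
        (if det p q l j = 1 ∧ (j, l) ≠ (0, n + 1) then 1 else 0) := by
  rw [hP.sigmaDot_eq_of_lt hF hjl, hP.sum_ite_parents_eq hF hl,
    hP.ite_parent_add_ite_parent_eq hF hjl hl]

theorem sigmaDot_succ (hF : IsFareyChain n p q) (hP : IsParentAssignment n p q j₁ j₂)
    (hn : 1 ≤ n) {j : ℕ} (hj : j ≤ n) : sigmaDot n j₁ j₂ j (j + 1) = -1 := by
  rw [hP.sigmaDot_of_lt hF (by omega) (by omega), if_neg (by omega),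
    if_pos ⟨hF.det_succ hj, by simp; omega⟩]
  norm_num

theorem sigmaDot_zero_last (hF : IsFareyChain n p q) (hP : IsParentAssignment n p q j₁ j₂)
    (hn : 1 ≤ n) : sigmaDot n j₁ j₂ 0 (n + 1) = 1 := by
  rw [hP.sigmaDot_of_lt hF (by omega) le_rfl, if_pos ⟨hF.det_last_zero, by omega⟩,
    if_neg fun h => h.2 rfl]
  norm_num

theorem sigmaDot_eq_zero (hF : IsFareyChain n p q) (hP : IsParentAssignment n p q j₁ j₂)
    {j l : ℕ} (hjl : j + 2 ≤ l) (hl : l ≤ n + 1) (hne : (j, l) ≠ (0, n + 1)) :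
    sigmaDot n j₁ j₂ j l = 0 := by
  rw [hP.sigmaDot_of_lt hF (by omega) hl]
  by_cases hD : det p q l j = 1
  · rw [if_pos ⟨hD, hjl⟩, if_pos ⟨hD, hne⟩, sub_self]
  · rw [if_neg fun h => hD h.1, if_neg fun h => hD h.1, sub_self]

theorem sigmaDot_self_mul (hF : IsFareyChain n p q) (hP : IsParentAssignment n p q j₁ j₂)
    (hn : 1 ≤ n) {w : ℕ → ℤ} (hw : ∀ t, 1 ≤ t → t ≤ n → w (j₁ t) + w (j₂ t) = w t) {i : ℕ}
    (hi : 1 ≤ i) (hi' : i ≤ n) : sigmaDot n j₁ j₂ i i * w i = w (i - 1) + w (i + 1) := by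
  have h := hP.sum_mul_sigmaDot_eq_zero hF hw i
  rw [sum_eq_add_add_of_mem (a := i - 1) (b := i) (c := i + 1) (by simp; omega)
    (by simp; omega) (by simp; omega) (by omega) (by omega) (by omega)] at h
  · have hprev : sigmaDot n j₁ j₂ i (i - 1) = -1 := by
      rw [sigmaDot_comm]; convert hP.sigmaDot_succ hF hn (j := i - 1) (by omega) using 2; omega
    rw [hprev, hP.sigmaDot_succ hF hn hi'] at h
    linarith
  · intro x hx hxa hxb hxc
    rw [mem_range] at hx
    rcases lt_or_gt_of_ne hxb with hxi | hxi
    · rw [sigmaDot_comm, hP.sigmaDot_eq_zero hF (by omega) (by omega) (by simp; omega), mul_zero]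
    · rw [hP.sigmaDot_eq_zero hF (by omega) (by omega) (by simp; omega), mul_zero]

theorem sigmaDot_zero_self_mul (hF : IsFareyChain n p q) (hP : IsParentAssignment n p q j₁ j₂)
    (hn : 1 ≤ n) {w : ℕ → ℤ} (hw : ∀ t, 1 ≤ t → t ≤ n → w (j₁ t) + w (j₂ t) = w t) :
    sigmaDot n j₁ j₂ 0 0 * w 0 = w 1 - w (n + 1) := by
  have h := hP.sum_mul_sigmaDot_eq_zero hF hw 0
  rw [sum_eq_add_add_of_mem (a := 0) (b := 1) (c := n + 1) (by simp)
    (by simp) (by simp) (by omega) (by omega) (by omega)] at h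
  · rw [hP.sigmaDot_succ hF hn (Nat.zero_le n), hP.sigmaDot_zero_last hF hn] at h
    linarith
  · intro x hx hx0 hx1 hxn
    rw [mem_range] at hx
    rw [hP.sigmaDot_eq_zero hF (by omega) (by omega) (by simp; omega), mul_zero]

theorem sigmaDot_last_self_mul (hF : IsFareyChain n p q) (hP : IsParentAssignment n p q j₁ j₂)
    (hn : 1 ≤ n) {w : ℕ → ℤ} (hw : ∀ t, 1 ≤ t → t ≤ n → w (j₁ t) + w (j₂ t) = w t) :
    sigmaDot n j₁ j₂ (n + 1) (n + 1) * w (n + 1) = w n - w 0 := by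
  have h := hP.sum_mul_sigmaDot_eq_zero hF hw (n + 1)
  rw [sum_eq_add_add_of_mem (a := 0) (b := n) (c := n + 1) (by simp)
    (by simp) (by simp) (by omega) (by omega) (by omega)] at h
  · rw [sigmaDot_comm, hP.sigmaDot_zero_last hF hn, sigmaDot_comm,
      hP.sigmaDot_succ hF hn le_rfl] at h
    linarith
  · intro x hx hx0 hxn hxn'
    rw [mem_range] at hx
    rw [sigmaDot_comm, hP.sigmaDot_eq_zero hF (by omega) (by omega) (by simp; omega), mul_zero]

theorem sigmaDot_self (hF : IsFareyChain n p q) (hP : IsParentAssignment n p q j₁ j₂)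
    (hn : 1 ≤ n) {j : ℕ} (hj : 1 ≤ j) (hj' : j ≤ n) :
    sigmaDot n j₁ j₂ j j = p (j + 1) * q (j - 1) - p (j - 1) * q (j + 1) := by
  have hp := hP.sigmaDot_self_mul hF hn (w := fun i => p i)
    (fun t ht ht' => by exact_mod_cast (hP.parent t ht ht').1) hj hj'
  have hq := hP.sigmaDot_self_mul hF hn (w := fun i => q i)
    (fun t ht ht' => by exact_mod_cast (hP.parent t ht ht').2.1) hj hj'
  have hdet := hF.det_succ hj'
  unfold det at hdet
  linear_combination (-sigmaDot n j₁ j₂ j j) * hdet + (p (j + 1) : ℤ) * hq - (q (j + 1) : ℤ) * hp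

theorem sigmaDot_zero_zero (hF : IsFareyChain n p q) (hP : IsParentAssignment n p q j₁ j₂)
    (hn : 1 ≤ n) : sigmaDot n j₁ j₂ 0 0 = q 1 := by
  have h := hP.sigmaDot_zero_self_mul hF hn (w := fun i => q i)
    (fun t ht ht' => by exact_mod_cast (hP.parent t ht ht').2.1)
  simpa [hF.q_zero, hF.q_last] using h

theorem sigmaDot_last_last (hF : IsFareyChain n p q) (hP : IsParentAssignment n p q j₁ j₂)
    (hn : 1 ≤ n) : sigmaDot n j₁ j₂ (n + 1) (n + 1) = p n := by
  have h := hP.sigmaDot_last_self_mul hF hn (w := fun i => p i)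
    (fun t ht ht' => by exact_mod_cast (hP.parent t ht ht').1)
  simpa [hF.p_zero, hF.p_last] using h

end IsParentAssignment

/-- Intersection pattern of the Σ-vectors of a Farey chain with a
parent assignment (standard dot product over coordinates `1 ≤ t ≤ n`). -/
theorem sigma_intersection_pattern (n : ℕ) (hn : 1 ≤ n) (p q : ℕ → ℕ)
    (hp0 : p 0 = 0) (hq0 : q 0 = 1)
    (hpn : p (n + 1) = 1) (hqn : q (n + 1) = 0)
    (hfarey : ∀ i ≤ n, p (i + 1) * q i = p i * q (i + 1) + 1)
    (j₁ j₂ : ℕ → ℕ)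
    (hj₁ : ∀ i, 1 ≤ i → i ≤ n → j₁ i ≤ n + 1)
    (hj₂ : ∀ i, 1 ≤ i → i ≤ n → j₂ i ≤ n + 1)
    (hparent : ∀ i, 1 ≤ i → i ≤ n →
      p (j₁ i) + p (j₂ i) = p i ∧ q (j₁ i) + q (j₂ i) = q i ∧
        p i * q (j₁ i) = p (j₁ i) * q i + 1)
    (s : ℕ → ℕ → ℤ)
    (hs : ∀ j t, 1 ≤ t → t ≤ n →
      s j t = if j = t then -1 else if j = j₁ t ∨ j = j₂ t then 1 else 0) :
    (∀ j, 1 ≤ j → j ≤ n →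
        (∑ t ∈ Finset.Icc 1 n, s j t * s j t) =
          (p (j + 1) : ℤ) * (q (j - 1) : ℤ) - (p (j - 1) : ℤ) * (q (j + 1) : ℤ)) ∧
    (∑ t ∈ Finset.Icc 1 n, s 0 t * s 0 t) = (q 1 : ℤ) ∧
    (∑ t ∈ Finset.Icc 1 n, s (n + 1) t * s (n + 1) t) = (p n : ℤ) ∧
    (∀ j ≤ n, (∑ t ∈ Finset.Icc 1 n, s j t * s (j + 1) t) = -1) ∧
    (∑ t ∈ Finset.Icc 1 n, s 0 t * s (n + 1) t) = 1 ∧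
    (∀ j l, j < l → l ≤ n + 1 → 2 ≤ l - j → (j, l) ≠ (0, n + 1) →
        (∑ t ∈ Finset.Icc 1 n, s j t * s l t) = 0) := by
  have hF : IsFareyChain n p q := ⟨hp0, hq0, hpn, hqn, hfarey⟩
  have hP : IsParentAssignment n p q j₁ j₂ := ⟨hj₁, hj₂, hparent⟩
  have hsigma : ∀ j l, ∑ t ∈ Icc 1 n, s j t * s l t = sigmaDot n j₁ j₂ j l := fun j l =>
    sum_congr rfl fun t ht => by
      rw [mem_Icc] at ht
      rw [hs j t ht.1 ht.2, hs l t ht.1 ht.2, sigma, sigma]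
  simp only [hsigma]
  exact ⟨fun j hj hj' => hP.sigmaDot_self hF hn hj hj', hP.sigmaDot_zero_zero hF hn,
    hP.sigmaDot_last_last hF hn, fun j hj => hP.sigmaDot_succ hF hn hj, hP.sigmaDot_zero_last hF hn,
    fun j l _ hl hjl hne => hP.sigmaDot_eq_zero hF (by omega) hl hne⟩
end

section
/- Let n and k be integers with 1 < k < n. Then the vector σ ∈ ℤⁿ whose coordinates are σ_i = 4(n−k) for 1 ≤ i ≤ k−1, σ_k = 2n−4k+1, σ_i = −(4k−2) for k+1 ≤ i ≤ n−1, and σ_n = −(2k−1), is not a changemaker. -/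
/-- A vector is a changemaker if, after taking absolute values of its entries and
sorting them in increasing order as `t_1 ≤ ⋯ ≤ t_m`, one has
`t_i ≤ 1 + ∑_{j<i} t_j` for all `i`. -/
def IsChangemaker {m : ℕ} (σ : Fin m → ℤ) : Prop :=
  let l := (Finset.univ.val.map fun i => |σ i|).sort (· ≤ ·)
  ∀ i : Fin l.length, l.get i ≤ 1 + ((l.take (i : ℕ)).sum)

/-!
The two smallest absolute values `t₁ ≤ t₂` of a changemaker satisfy `t₁ ≤ 1` and
`t₂ ≤ 1 + t₁ ≤ 2`, so a changemaker with at least two entries has at least two entries of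
absolute value at most `2`. In the vector `σ` only `σ_k` can be that small: the other
absolute values are `4(n − k) ≥ 4`, `4k − 2 ≥ 6` and `2k − 1 ≥ 3`.
-/

open Finset

theorem IsChangemaker.two_le_card_abs_le_two {m : ℕ} {σ : Fin m → ℤ} (h : IsChangemaker σ)
    (hm : 2 ≤ m) : 2 ≤ #{i | |σ i| ≤ 2} := by
  dsimp only [IsChangemaker] at h
  set l := (univ.val.map fun i => |σ i|).sort (· ≤ ·) with hl
  have hlen : l.length = m := by simp [hl]
  obtain ⟨a, b, t, hab⟩ : ∃ a b t, l = a :: b :: t := by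
    rcases l with _ | ⟨a, _ | ⟨b, t⟩⟩
    · simp at hlen; omega
    · simp at hlen; omega
    · exact ⟨a, b, t, rfl⟩
  have ha : a ≤ 1 := by simpa [hab] using h ⟨0, by omega⟩
  have hb : b ≤ 1 + a := by simpa [hab] using h ⟨1, by omega⟩
  have hcard : #{i | |σ i| ≤ 2} = (l.filter (· ≤ 2)).length := by
    rw [← Multiset.coe_card, ← Multiset.filter_coe, hl, Multiset.sort_eq,
      Multiset.filter_map, Multiset.card_map]
    rfl
  rw [hcard, hab]
  simp [show a ≤ 2 by omega, show b ≤ 2 by omega]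

def complementaryVector (n k : ℕ) : Fin n → ℤ := fun i =>
  if (i : ℕ) + 1 < k then 4 * ((n : ℤ) - k)
  else if (i : ℕ) + 1 = k then 2 * (n : ℤ) - 4 * k + 1
  else if (i : ℕ) + 1 < n then -(4 * (k : ℤ) - 2)
  else -(2 * (k : ℤ) - 1)

theorem complementaryVector_eq_of_abs_le_two {n k : ℕ} (h1 : 1 < k) (h2 : k < n) {i : Fin n}
    (hi : |complementaryVector n k i| ≤ 2) : (i : ℕ) + 1 = k := by
  unfold complementaryVector at hi
  split_ifs at hi <;> rw [abs_le] at hi <;> omega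

theorem card_complementaryVector_abs_le_two {n k : ℕ} (h1 : 1 < k) (h2 : k < n) :
    #{i | |complementaryVector n k i| ≤ 2} ≤ 1 := by
  refine card_le_one.mpr fun i hi j hj => Fin.ext ?_
  simp only [mem_filter, mem_univ, true_and] at hi hj
  have := complementaryVector_eq_of_abs_le_two h1 h2 hi
  have := complementaryVector_eq_of_abs_le_two h1 h2 hj
  omega

/-- For `1 < k < n`, the complementary vector
`σ = (4(n−k), …, 4(n−k), 2n−4k+1, −(4k−2), …, −(4k−2), −(2k−1))`
(coordinates indexed `1, …, n`) is not a changemaker. -/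
theorem sigma_not_changemaker (n k : ℕ) (h1 : 1 < k) (h2 : k < n) :
    ¬ IsChangemaker (fun i : Fin n =>
      if (i : ℕ) + 1 < k then 4 * ((n : ℤ) - k)
      else if (i : ℕ) + 1 = k then 2 * (n : ℤ) - 4 * k + 1
      else if (i : ℕ) + 1 < n then -(4 * (k : ℤ) - 2)
      else -(2 * (k : ℤ) - 1)) := by
  intro h
  have hge := h.two_le_card_abs_le_two (by omega)
  have hle := card_complementaryVector_abs_le_two h1 h2
  unfold complementaryVector at hle
  omega
end

section
/- Let n and k be integers with 2 ≤ k and k + 2 ≤ n. Define F : List ℤ → ℤ × ℤ by F [] = (1, 0) and F (a :: l) = (a * (F l).1 − (F l).2, (F l).1). Let L be the list of integers n :: 5 :: (replicate (n−k−2) 2 ++ (6 :: replicate (k−2) 2)). Then F L = (16n²k − 16nk² − 12n² + 4k² + 8n − 2, 16nk − 16k² − 12n + 4k + 5). -/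
/-- Numerator/denominator of a Hirzebruch–Jung (negative) continued fraction:
`F [] = (1, 0)` and `F (a :: l) = (a * (F l).1 − (F l).2, (F l).1)`. -/
def F : List ℤ → ℤ × ℤ
  | [] => (1, 0)
  | a :: l => (a * (F l).1 - (F l).2, (F l).1)

lemma F_cons (a : ℤ) (l : List ℤ) : F (a :: l) = (a * (F l).1 - (F l).2, (F l).1) := rfl

lemma F_replicate_two_append (m : ℕ) (l : List ℤ) :
    F (List.replicate m 2 ++ l) =
      ((m + 1) * (F l).1 - m * (F l).2, m * (F l).1 - ((m : ℤ) - 1) * (F l).2) := by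
  induction m with
  | zero => simp
  | succ m ih =>
    rw [List.replicate_succ, List.cons_append, F_cons, ih]
    push_cast
    ext <;> ring

lemma F_replicate_two (m : ℕ) : F (List.replicate m 2) = ((m : ℤ) + 1, (m : ℤ)) := by
  simpa [F] using F_replicate_two_append m []

/-- The negative continued fraction of the reversed plumbing
coefficients `[2^{k−2}, 6, 2^{n−k−2}, 5, n]` evaluates to the lens space
parameters of Theorem 4. -/
theorem continued_fraction_evaluation (n k : ℕ) (hk : 2 ≤ k) (hn : k + 2 ≤ n) :
    F ((n : ℤ) :: 5 :: (List.replicate (n - k - 2) 2 ++ (6 :: List.replicate (k - 2) 2))) =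
      (16 * (n : ℤ) ^ 2 * k - 16 * n * k ^ 2 - 12 * n ^ 2 + 4 * k ^ 2 + 8 * n - 2,
        16 * (n : ℤ) * k - 16 * k ^ 2 - 12 * n + 4 * k + 5) := by
  obtain ⟨a, rfl⟩ := Nat.exists_eq_add_of_le' hk
  obtain ⟨b, rfl⟩ := Nat.exists_eq_add_of_le hn
  have hb : a + 2 + 2 + b - (a + 2) - 2 = b := by omega
  rw [hb, Nat.add_sub_cancel, F_cons, F_cons, F_replicate_two_append, F_cons, F_replicate_two]
  push_cast
  ext <;> ring
end

section
/- Let P be the Petersen graph and let S be the graph obtained from P by subdividing each edge once. Then S contains an induced path on 19 vertices: there exists an injective map f from {0, 1, …, 18} to the vertices of S such that, for all i and j, f(i) and f(j) are adjacent in S if and only if |i − j| = 1. -/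
/-- The Petersen graph, on vertex set `ZMod 5 × Bool`: outer 5-cycle on the
`false` vertices, inner pentagram (steps of ±2) on the `true` vertices, and
spokes joining `(i, false)` to `(i, true)`. -/
def Petersen : SimpleGraph (ZMod 5 × Bool) :=
  SimpleGraph.fromRel fun x y =>
    (x.2 = false ∧ y.2 = false ∧ (y.1 = x.1 + 1 ∨ y.1 = x.1 - 1)) ∨
    (x.2 = true ∧ y.2 = true ∧ (y.1 = x.1 + 2 ∨ y.1 = x.1 - 2)) ∨
    (x.2 = false ∧ y.2 = true ∧ x.1 = y.1)

/-- The subdivision of the Petersen graph: one new vertex in the middle of each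
edge, so the vertex set is `V(P) ⊕ E(P)`, with `Sum.inl v` adjacent to
`Sum.inr e` iff `v` is an endpoint of `e`. -/
def PetersenSubdiv : SimpleGraph ((ZMod 5 × Bool) ⊕ Petersen.edgeSet) :=
  SimpleGraph.fromRel fun a b =>
    match a, b with
    | Sum.inl v, Sum.inr e => v ∈ (e : Sym2 (ZMod 5 × Bool))
    | _, _ => False

instance : DecidableRel Petersen.Adj := fun a b => by
  unfold Petersen; rw [SimpleGraph.fromRel_adj]; infer_instance

def pedge (a b : ZMod 5 × Bool) (h : Petersen.Adj a b) : Petersen.edgeSet := ⟨s(a,b), h⟩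

instance : DecidableRel PetersenSubdiv.Adj := fun a b => by
  unfold PetersenSubdiv; rw [SimpleGraph.fromRel_adj]
  refine instDecidableAnd (dq := ?_)
  rcases a with v | e <;> rcases b with w | f
  · exact .isFalse (by rintro (h | h) <;> exact h)
  · exact instDecidableOr (dp := Sym2.Mem.decidable ..) (dq := .isFalse id)
  · exact instDecidableOr (dp := .isFalse id) (dq := Sym2.Mem.decidable ..)
  · exact .isFalse (by rintro (h | h) <;> exact h)

def pathf : Fin 19 → ((ZMod 5 × Bool) ⊕ Petersen.edgeSet) :=
  ![ .inl (0, false), .inr (pedge (0,false) (1,false) (by decide)),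
     .inl (1, false), .inr (pedge (1,false) (2,false) (by decide)),
     .inl (2, false), .inr (pedge (2,false) (3,false) (by decide)),
     .inl (3, false), .inr (pedge (3,false) (4,false) (by decide)),
     .inl (4, false), .inr (pedge (4,false) (4,true) (by decide)),
     .inl (4, true),  .inr (pedge (4,true) (2,true) (by decide)),
     .inl (2, true),  .inr (pedge (2,true) (0,true) (by decide)),
     .inl (0, true),  .inr (pedge (0,true) (3,true) (by decide)),
     .inl (3, true),  .inr (pedge (3,true) (1,true) (by decide)),
     .inl (1, true) ]

/-- The subdivided Petersen graph contains an induced path on 19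
vertices. -/
theorem subdivided_petersen_induced_path :
    ∃ f : Fin 19 → ((ZMod 5 × Bool) ⊕ Petersen.edgeSet),
      Function.Injective f ∧
        ∀ i j : Fin 19,
          PetersenSubdiv.Adj (f i) (f j) ↔ ((i : ℕ) = j + 1 ∨ (j : ℕ) = i + 1) := by
  refine ⟨pathf, by decide, by decide⟩
end
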